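/- Let 𝒞 be a nowhere dense class of finite graphs. Then there exists a function c : ℕ → ℕ such that for every r ∈ ℕ, every graph G ∈ 𝒞, and every vertex subset A ⊆ V(G) with |A| ≥ 2, the r-neighborhood complexity satisfies ν_r(G,A) ≤ |A|^{c(r)}. -/

import Mathlib

open SimpleGraph

/-- A finite simple graph: a bundled finite vertex type together with a simple graph on it. -/
structure FinGraph : Type 1 where
  V : Type
  fintypeV : Fintype V
  graph : SimpleGraph V

attribute [instance] FinGraph.fintypeV

/-- The set `S` induces a subgraph of `G` of radius at most `r`:
there is a center `c ∈ S` from which every vertex of `S` is at distance at most `r`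
inside the subgraph induced by `S`. -/
def hasRadiusLE {V : Type} (G : SimpleGraph V) (S : Set V) (r : ℕ) : Prop :=
  ∃ c : S, ∀ x : S, (G.induce S).edist c x ≤ (r : ℕ∞)

/-- `H` is a depth-`r` minor of `G`: there is a minor model of `H` in `G` with
pairwise disjoint connected branch sets of radius at most `r`. -/
def IsDepthMinor {W V : Type} (r : ℕ) (H : SimpleGraph W) (G : SimpleGraph V) : Prop :=
  ∃ I : W → Set V,
    (∀ u, hasRadiusLE G (I u) r) ∧
    (Pairwise fun u v => Disjoint (I u) (I v)) ∧
    (∀ u v, H.Adj u v → ∃ a ∈ I u, ∃ b ∈ I v, G.Adj a b)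

/-- A class of finite graphs is nowhere dense if there is `f : ℕ → ℕ` such that
`K_{f r}` is not a depth-`r` minor of any member, for every `r`. -/
def NowhereDense (C : Set FinGraph) : Prop :=
  ∃ f : ℕ → ℕ, ∀ r : ℕ, ∀ G ∈ C, ¬ IsDepthMinor r (completeGraph (Fin (f r))) G.graph

/-- `H` is (isomorphic to) a subgraph of `G`. -/
def IsSubgraphOf (H G : FinGraph) : Prop :=
  ∃ f : H.V ↪ G.V, ∀ u v, H.graph.Adj u v → G.graph.Adj (f u) (f v)

/-- A class of graphs is monotone if it is closed under taking subgraphs. -/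
def MonotoneClass (C : Set FinGraph) : Prop :=
  ∀ G ∈ C, ∀ H : FinGraph, IsSubgraphOf H G → H ∈ C

/-- The closed ball of radius `r` around `v`: `N_r[v]`. -/
def ball {V : Type} (G : SimpleGraph V) (r : ℕ) (v : V) : Set V :=
  {u | G.edist u v ≤ (r : ℕ∞)}

/-- The `r`-neighborhood complexity `ν_r(G,A)`. -/
noncomputable def nu {V : Type} (G : SimpleGraph V) (r : ℕ) (A : Set V) : ℕ :=
  {S : Set V | ∃ v : V, S = ball G r v ∩ A}.ncard

/-- The value of the `r`-distance profile of `u` at `x`: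
`dist_G(u,x)` if it is at most `r`, and `∞` otherwise. -/
noncomputable def profVal {V : Type} (G : SimpleGraph V) (r : ℕ) (u x : V) : ℕ∞ :=
  if G.edist u x ≤ (r : ℕ∞) then G.edist u x else ⊤

/-- The distance profile complexity `ν̂_r(G,A)`: the number of distinct
`r`-distance profiles `π_r[u,A] : A → {0,…,r,∞}` over `u ∈ V(G)`. -/
noncomputable def nuHat {V : Type} (G : SimpleGraph V) (r : ℕ) (A : Set V) : ℕ :=
  {f : ↥A → ℕ∞ | ∃ u : V, f = fun x : ↥A => profVal G r u ↑x}.ncard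

/-- A family `F` of subsets shatters `X` if every subset of `X` is an intersection of
`X` with a member of `F`. -/
def Shatters {U : Type} (F : Set (Set U)) (X : Set U) : Prop :=
  ∀ Y ⊆ X, ∃ S ∈ F, X ∩ S = Y

/-- The family `F` has VC-dimension at most `d`. -/
def VCDimLE {U : Type} (F : Set (Set U)) (d : ℕ) : Prop :=
  ∀ X : Set U, Shatters F X → X.ncard ≤ d

/-- `WReach_r[G,L,v]`: the set of vertices weakly `r`-reachable from `v` with respect to
the linear order `L`: vertices `u` joined to `v` by a path of length at most `r` on which
`u` is the `L`-least vertex. -/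
def WReach {V : Type} (G : SimpleGraph V) (L : LinearOrder V) (r : ℕ) (v : V) : Set V :=
  {u | ∃ p : G.Walk u v, p.IsPath ∧ p.length ≤ r ∧ ∀ x ∈ p.support, L.le u x}

/-- `B` is `r`-independent in `G`: distinct vertices of `B` are at distance more than `r`. -/
def RIndep {V : Type} (G : SimpleGraph V) (r : ℕ) (B : Set V) : Prop :=
  ∀ u ∈ B, ∀ v ∈ B, u ≠ v → (r : ℕ∞) < G.edist u v

/-- The length of a shortest `A`-avoiding path from `u` to `v`
(all vertices except possibly `v` lie outside `A`); `∞` if there is none. -/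
noncomputable def avoidDist {V : Type} (G : SimpleGraph V) (A : Set V) (u v : V) : ℕ∞ :=
  sInf {n : ℕ∞ | ∃ p : G.Walk u v, p.IsPath ∧ (∀ x ∈ p.support, x ≠ v → x ∉ A) ∧ (p.length : ℕ∞) = n}

/-- The value of the `r`-projection profile `ρ_r[u,A]` at `v`. -/
noncomputable def projProfVal {V : Type} (G : SimpleGraph V) (r : ℕ) (A : Set V) (u v : V) : ℕ∞ :=
  if avoidDist G A u v ≤ (r : ℕ∞) then avoidDist G A u v else ⊤

/-- The `r`-projection `M_r(u,A)` of `u` on `A`. -/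
def Mproj {V : Type} (G : SimpleGraph V) (r : ℕ) (A : Set V) (u : V) : Set V :=
  {v ∈ A | avoidDist G A u v ≤ (r : ℕ∞)}

/-- The projection profile complexity `μ̂_r(G,A)`: the number of distinct
`r`-projection profiles `ρ_r[u,A]` over `u ∈ V(G) ∖ A`. -/
noncomputable def muHat {V : Type} (G : SimpleGraph V) (r : ℕ) (A : Set V) : ℕ :=
  {f : ↥A → ℕ∞ | ∃ u : V, u ∉ A ∧ f = fun v : ↥A => projProfVal G r A u ↑v}.ncard

/-- `D` is a `(Z,r)`-dominator in `G`: every vertex of `Z` is at distance at most `r`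
from some vertex of `D`. -/
def IsDominator {V : Type} (G : SimpleGraph V) (r : ℕ) (Z D : Set V) : Prop :=
  ∀ z ∈ Z, ∃ d ∈ D, G.edist z d ≤ (r : ℕ∞)

/-- `D` is a minimum-size `(Z,r)`-dominator in `G`. -/
def IsMinDominator {V : Type} (G : SimpleGraph V) (r : ℕ) (Z D : Set V) : Prop :=
  IsDominator G r Z D ∧ ∀ D' : Set V, IsDominator G r Z D' → D.ncard ≤ D'.ncard

/-- `Z` is an `r`-domination core of `G`: every minimum-size `(Z,r)`-dominator
is an `r`-dominating set of `G`. -/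
def IsDomCore {V : Type} (G : SimpleGraph V) (r : ℕ) (Z : Set V) : Prop :=
  ∀ D : Set V, IsMinDominator G r Z D → IsDominator G r Set.univ D

/-- `ds_r(G,Z)`: the minimum size of a `(Z,r)`-dominator in `G`. -/
noncomputable def dsr {V : Type} (G : SimpleGraph V) (r : ℕ) (Z : Set V) : ℕ :=
  sInf {n : ℕ | ∃ D : Set V, IsDominator G r Z D ∧ D.ncard = n}

/-!
If the traces of the `r`-balls on `A` shatter a set `X = {x₁, …, x_t}`, then for each pair
`i ≠ j` some vertex `v` has `N_r[v] ∩ X = {xᵢ, xⱼ}`. The radius-`r` Voronoi cells of the `xₖ`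
(ties broken by index) are disjoint; each has radius at most `r` around its centre, being closed
under walking along shortest paths towards the centre; and the shortest paths from `v` to `xᵢ`
and to `xⱼ` run inside the cells of `xᵢ` and `xⱼ`, so these two cells are adjacent. Hence `K_t`
is a depth-`r` minor of `G`, the VC-dimension of the ball traces is below `f r`, and the
Sauer–Shelah lemma bounds their number by `|A| ^ f r`.
-/

open Finset Function

lemma ENat.toLex_le_toLex_of_add_le {ι : Type} [Preorder ι] {a a' b c : ℕ∞} {k j : ι}
    (hc : c ≠ ⊤) (h : toLex (c + a, k) ≤ toLex (b, j)) (hb : b ≤ c + a') :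
    toLex (a, k) ≤ toLex (a', j) := by
  rw [Prod.Lex.toLex_le_toLex] at h ⊢
  rcases h with h | ⟨h, hkj⟩
  · exact Or.inl ((ENat.add_lt_add_iff_left hc).1 (h.trans_le hb))
  · rcases ((ENat.add_le_add_iff_left hc).1 (h.trans_le hb)).lt_or_eq with h' | h'
    · exact Or.inl h'
    · exact Or.inr ⟨h', hkj⟩

namespace SimpleGraph

variable {V : Type} {G : SimpleGraph V}

lemma Walk.edist_add_edist_of_mem_support {u v w : V} (p : G.Walk u v)
    (hp : (p.length : ℕ∞) = G.edist u v) (hw : w ∈ p.support) :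
    G.edist u w + G.edist w v = G.edist u v := by
  classical
  refine le_antisymm ?_ SimpleGraph.edist_triangle
  rw [← hp, ← p.take_spec hw, Walk.length_append, Nat.cast_add]
  exact add_le_add (edist_le _) (edist_le _)

variable (G) {ι : Type} [LinearOrder ι]

def voronoiCell (r : ℕ) (x : ι → V) (k : ι) : Set V :=
  {u | G.edist u (x k) ≤ r ∧ ∀ j, toLex (G.edist u (x k), k) ≤ toLex (G.edist u (x j), j)}

variable {G} {r : ℕ} {x : ι → V}

lemma pairwise_disjoint_voronoiCell : Pairwise (Disjoint on G.voronoiCell r x) := by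
  intro i j hij
  refine Set.disjoint_left.2 fun u hi hj => hij ?_
  exact congrArg Prod.snd (toLex.injective (le_antisymm (hi.2 j) (hj.2 i)))

lemma mem_voronoiCell_self (hx : Injective x) (k : ι) : x k ∈ G.voronoiCell r x k := by
  refine ⟨by simp, fun j => ?_⟩
  rw [edist_self, Prod.Lex.toLex_le_toLex]
  rcases eq_or_ne (G.edist (x k) (x j)) 0 with h | h
  · exact Or.inr ⟨h.symm, (hx (edist_eq_zero_iff.1 h)).le⟩
  · exact Or.inl (pos_iff_ne_zero.2 h)

lemma exists_mem_voronoiCell [Finite ι] {u : V} {i : ι} (hu : G.edist u (x i) ≤ r) :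
    ∃ k, u ∈ G.voronoiCell r x k ∧ G.edist u (x k) ≤ G.edist u (x i) := by
  have : Nonempty ι := ⟨i⟩
  obtain ⟨k, hk⟩ := Finite.exists_min fun k => toLex (G.edist u (x k), k)
  have hki : G.edist u (x k) ≤ G.edist u (x i) := (Prod.Lex.toLex_le_toLex'.1 (hk i)).1
  exact ⟨k, ⟨hki.trans hu, hk⟩, hki⟩

lemma mem_voronoiCell_of_mem_support {k : ι} {u w : V} (hu : u ∈ G.voronoiCell r x k)
    (p : G.Walk u (x k)) (hp : (p.length : ℕ∞) = G.edist u (x k)) (hw : w ∈ p.support) :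
    w ∈ G.voronoiCell r x k := by
  have hsplit := p.edist_add_edist_of_mem_support hp hw
  have hfin : G.edist u w ≠ ⊤ :=
    ne_top_of_le_ne_top (ENat.natCast_ne_top r) ((le_self_add.trans hsplit.le).trans hu.1)
  refine ⟨(le_add_self.trans hsplit.le).trans hu.1, fun j => ?_⟩
  exact ENat.toLex_le_toLex_of_add_le hfin (hsplit ▸ hu.2 j) SimpleGraph.edist_triangle

lemma hasRadiusLE_voronoiCell (hx : Injective x) (k : ι) :
    hasRadiusLE G (G.voronoiCell r x k) r := by
  refine ⟨⟨x k, mem_voronoiCell_self hx k⟩, fun ⟨u, hu⟩ => ?_⟩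
  obtain ⟨p, hp⟩ := (reachable_of_edist_ne_top
    (ne_top_of_le_ne_top (ENat.natCast_ne_top r) hu.1)).exists_walk_length_eq_edist
  have hlen : (p.induce _ fun w hw => mem_voronoiCell_of_mem_support hu p hp hw).length =
      p.length := by
    rw [← Walk.length_map (Embedding.induce _).toHom, Walk.map_induce]
    rfl
  rw [edist_comm]
  exact (edist_le _).trans (hlen ▸ hp ▸ hu.1)

lemma exists_mem_voronoiCell_of_mem_support [Finite ι] {v w : V} {i : ι}
    (hi : G.edist (x i) v ≤ r) (p : G.Walk v (x i)) (hp : (p.length : ℕ∞) = G.edist v (x i))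
    (hw : w ∈ p.support) : ∃ k, w ∈ G.voronoiCell r x k ∧ G.edist (x k) v ≤ r := by
  have hsplit := p.edist_add_edist_of_mem_support hp hw
  have hvi : G.edist v (x i) ≤ r := by rw [edist_comm]; exact hi
  obtain ⟨k, hk, hki⟩ := exists_mem_voronoiCell (r := r) (x := x)
    ((le_add_self.trans hsplit.le).trans hvi)
  refine ⟨k, hk, ?_⟩
  rw [edist_comm]
  calc G.edist v (x k) ≤ G.edist v w + G.edist w (x k) := SimpleGraph.edist_triangle
    _ ≤ G.edist v w + G.edist w (x i) := by gcongr
    _ ≤ r := hsplit ▸ hvi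

lemma exists_adj_voronoiCell [Finite ι] (hx : Injective x) {i j : ι} (hij : i ≠ j)
    {v : V} (hv : ∀ k, G.edist (x k) v ≤ r ↔ k = i ∨ k = j) :
    ∃ a ∈ G.voronoiCell r x i, ∃ b ∈ G.voronoiCell r x j, G.Adj a b := by
  have hwalk : ∀ k, G.edist (x k) v ≤ r → ∃ p : G.Walk v (x k), ∀ w ∈ p.support,
      w ∈ G.voronoiCell r x i ∪ G.voronoiCell r x j := by
    intro k hk
    have hvk : G.edist v (x k) ≠ ⊤ := by
      rw [edist_comm]; exact ne_top_of_le_ne_top (ENat.natCast_ne_top r) hk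
    obtain ⟨p, hp⟩ := (reachable_of_edist_ne_top hvk).exists_walk_length_eq_edist
    refine ⟨p, fun w hw => ?_⟩
    obtain ⟨k', hk', hk'v⟩ := exists_mem_voronoiCell_of_mem_support hk p hp hw
    rcases (hv k').1 hk'v with rfl | rfl
    exacts [Or.inl hk', Or.inr hk']
  obtain ⟨pi, hpi⟩ := hwalk i ((hv i).2 (Or.inl rfl))
  obtain ⟨pj, hpj⟩ := hwalk j ((hv j).2 (Or.inr rfl))
  have hxj : x j ∉ G.voronoiCell r x i :=
    Set.disjoint_right.1 (pairwise_disjoint_voronoiCell hij) (mem_voronoiCell_self hx j)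
  obtain ⟨d, hd, hd₁, hd₂⟩ :=
    (pi.reverse.append pj).exists_boundary_dart _ (mem_voronoiCell_self hx i) hxj
  have hsupp : d.snd ∈ (pi.reverse.append pj).support :=
    Walk.dart_snd_mem_support_of_mem_darts _ hd
  rw [Walk.mem_support_append_iff, Walk.support_reverse, List.mem_reverse] at hsupp
  refine ⟨d.fst, hd₁, d.snd, ?_, d.adj⟩
  exact (hsupp.elim (hpi _) (hpj _)).resolve_left hd₂

end SimpleGraph

theorem isDepthMinor_completeGraph_of_ball_inter_eq_pair {V ι : Type} [Finite ι] [LinearOrder ι]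
    {G : SimpleGraph V} {r : ℕ} {x : ι → V} (hx : Injective x)
    (h : ∀ i j, i ≠ j → ∃ v, ∀ k, x k ∈ ball G r v ↔ k = i ∨ k = j) :
    IsDepthMinor r (completeGraph ι) G :=
  ⟨G.voronoiCell r x, hasRadiusLE_voronoiCell hx, pairwise_disjoint_voronoiCell,
    fun i j hij => exists_adj_voronoiCell hx hij (h i j hij).choose_spec⟩

theorem Finset.card_le_pow_of_vcDim_lt {α : Type*} [Fintype α] [DecidableEq α]
    {𝒜 : Finset (Finset α)} {d : ℕ} (hα : 2 ≤ Fintype.card α) (h : 𝒜.vcDim < d) :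
    #𝒜 ≤ Fintype.card α ^ d :=
  calc #𝒜 ≤ #𝒜.shatterer := card_le_card_shatterer 𝒜
    _ ≤ ∑ k ∈ Iic 𝒜.vcDim, (Fintype.card α).choose k := card_shatterer_le_sum_vcDim
    _ ≤ ∑ k ∈ Iic 𝒜.vcDim, Fintype.card α ^ k := sum_le_sum fun _ _ => Nat.choose_le_pow _ _
    _ ≤ Fintype.card α ^ d := (Nat.geomSum_lt hα fun _ hk => (mem_Iic.1 hk).trans_lt h).le

section BallTraces

variable {V : Type} [Fintype V] [DecidableEq V] (G : SimpleGraph V) (r : ℕ) (A : Set V)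

open Classical in
-- The traces `N_r[v] ∩ A` are finsets of the subtype `A`, so that Sauer–Shelah counts in `|A|`.
noncomputable def ballTraces : Finset (Finset A) :=
  univ.image fun v => univ.filter fun a : A => (a : V) ∈ ball G r v

lemma nu_le_card_ballTraces : nu G r A ≤ #(ballTraces G r A) := by
  classical
  rw [nu, ← Set.ncard_coe_finset]
  refine Set.ncard_le_ncard_of_injOn (fun S => univ.filter fun a : A => (a : V) ∈ S) ?_ ?_
    (Set.toFinite _)
  · rintro _ ⟨v, rfl⟩
    refine mem_coe.2 (mem_image.2 ⟨v, mem_univ _, ?_⟩)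
    ext a
    simp
  · rintro _ ⟨v, rfl⟩ _ ⟨v', rfl⟩ h
    ext y
    by_cases hy : y ∈ A
    · simpa [hy] using congrArg (⟨y, hy⟩ ∈ ·) h
    · simp [hy]

lemma isDepthMinor_of_shatters_ballTraces {s : Finset A} (hs : (ballTraces G r A).Shatters s) :
    IsDepthMinor r (completeGraph (Fin #s)) G := by
  classical
  set y : Fin #s → A := fun k => s.equivFin.symm k
  have hy : Injective y := Subtype.val_injective.comp s.equivFin.symm.injective
  refine isDepthMinor_completeGraph_of_ball_inter_eq_pair
    (x := fun k => (y k : V)) (Subtype.val_injective.comp hy) fun i j _ => ?_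
  have hpair : {y i, y j} ⊆ s := by
    simp [insert_subset_iff, y]
  obtain ⟨u, hu, hsu⟩ := hs hpair
  obtain ⟨v, -, rfl⟩ := mem_image.1 hu
  refine ⟨v, fun k => ?_⟩
  have hk := congrArg (y k ∈ ·) hsu
  simp only [mem_inter, mem_filter_univ, mem_insert, mem_singleton, hy.eq_iff, y,
    (s.equivFin.symm k).2, true_and] at hk
  exact Iff.of_eq hk

lemma vcDim_ballTraces_lt (hA : A.Nonempty) {t : ℕ}
    (hK : ¬ IsDepthMinor r (completeGraph (Fin t)) G) : (ballTraces G r A).vcDim < t := by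
  have hsmall : ∀ s, (ballTraces G r A).Shatters s → #s < t := fun s hs => by
    by_contra! h
    obtain ⟨s', hs', rfl⟩ := exists_subset_card_eq h
    exact hK (isDepthMinor_of_shatters_ballTraces G r A (hs.mono_right hs'))
  have hne : (ballTraces G r A).Nonempty := image_nonempty.2 ⟨hA.some, mem_univ _⟩
  exact (Finset.sup_lt_iff (hsmall ∅ (shatters_empty.2 hne))).2 fun s hs =>
    hsmall s (mem_shatterer.1 hs)

end BallTraces

/-- Nowhere dense classes have polynomial neighborhood complexity. -/
theorem neighborhood_complexity_poly_of_nowhereDense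
    (C : Set FinGraph) (hC : NowhereDense C) :
    ∃ c : ℕ → ℕ, ∀ (r : ℕ), ∀ G ∈ C, ∀ A : Set G.V, 2 ≤ A.ncard →
      nu G.graph r A ≤ A.ncard ^ c r := by
  classical
  obtain ⟨f, hf⟩ := hC
  refine ⟨f, fun r G hG A hA => ?_⟩
  have hcard : Fintype.card A = A.ncard := by
    rw [← Nat.card_eq_fintype_card, Nat.card_coe_set_eq]
  calc nu G.graph r A ≤ #(ballTraces G.graph r A) := nu_le_card_ballTraces G.graph r A
    _ ≤ Fintype.card A ^ f r :=
      card_le_pow_of_vcDim_lt (hcard ▸ hA) <| vcDim_ballTraces_lt G.graph r A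
        (Set.nonempty_of_ncard_ne_zero (by omega)) (hf r G hG)
    _ = A.ncard ^ f r := by rw [hcard]
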